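/- For every partial infinite trace M and individual name a: M,0 ⊨ ◇⁺{a} ⊑ □⁺{a} if and only if either a is a ghost in M (a^{I_t} is undefined for all t ∈ ℕ) or there exists d ∈ Δ such that a^{I_t} is defined and equal to d for all t ∈ ℕ. Hence the concept inclusion ◇⁺{a} ⊑ □⁺{a} enforces rigid designation of a on partial infinite traces. -/

import Mathlib

mutual
inductive Tm : Type where
  | ind  : ℕ → Tm          -- individual name
  | iota : Cpt → Tm        -- definite description ιC
  deriving DecidableEq

inductive Cpt : Type where
  | atom  : ℕ → Cpt        -- concept name
  | nom   : Tm → Cpt       -- nominal {τ}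
  | neg   : Cpt → Cpt
  | inter : Cpt → Cpt → Cpt
  | ex    : ℕ → Cpt → Cpt  -- ∃r.C, r a role name
  | exu   : Cpt → Cpt      -- ∃u.C, u the universal role
  | untl  : Cpt → Cpt → Cpt -- C U D
  deriving DecidableEq
end

/-- Formulas of `LTL_ALCOu^ι`. -/
inductive Fm : Type where
  | sub  : Cpt → Cpt → Fm   -- C ⊑ D
  | neg  : Fm → Fm
  | and  : Fm → Fm → Fm
  | untl : Fm → Fm → Fm     -- φ U ψ
  deriving DecidableEq

/-- Partial infinite trace (constant domain, flow of time `(ℕ, <)`). -/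
structure Trace where
  Δ : Type
  hΔ : Nonempty Δ
  cI : ℕ → ℕ → Set Δ
  rI : ℕ → ℕ → Set (Δ × Δ)
  iI : ℕ → ℕ → Option Δ

open Classical in
/-- The value of a definite description: defined iff the set is a singleton. -/
noncomputable def iotaVal {D : Type} (s : Set D) : Option D :=
  if h : ∃ d, s = {d} then some h.choose else none

mutual
/-- Value of a term at an instant (partial, given as `Option`). -/
noncomputable def tmVal (M : Trace) : ℕ → Tm → Option M.Δ
  | t, .ind a  => M.iI t a
  | t, .iota C => iotaVal (cExt M t C)

/-- Extension of a concept at an instant. -/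
noncomputable def cExt (M : Trace) : ℕ → Cpt → Set M.Δ
  | t, .atom A    => M.cI t A
  | t, .nom τ     => {d | tmVal M t τ = some d}
  | t, .neg C     => (cExt M t C)ᶜ
  | t, .inter C D => cExt M t C ∩ cExt M t D
  | t, .ex r C    => {d | ∃ e, (d, e) ∈ M.rI t r ∧ e ∈ cExt M t C}
  | t, .exu C     => {_d : M.Δ | ∃ e, e ∈ cExt M t C}
  | t, .untl C D  =>
      {d | ∃ u, t < u ∧ d ∈ cExt M u D ∧ ∀ v, t < v → v < u → d ∈ cExt M v C}
end

/-- Satisfaction of a formula at an instant. -/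
def sat (M : Trace) : ℕ → Fm → Prop
  | t, .sub C D  => cExt M t C ⊆ cExt M t D
  | t, .neg φ    => ¬ sat M t φ
  | t, .and φ ψ  => sat M t φ ∧ sat M t ψ
  | t, .untl φ ψ => ∃ u, t < u ∧ sat M u ψ ∧ ∀ v, t < v → v < u → sat M v φ

/-- Standard abbreviations. -/
def cBot : Cpt := .inter (.atom 0) (.neg (.atom 0))
def cTop : Cpt := .neg cBot
def cOr (C D : Cpt) : Cpt := .neg (.inter (.neg C) (.neg D))
def cImp (C D : Cpt) : Cpt := cOr (.neg C) D
def cAllu (C : Cpt) : Cpt := .neg (.exu (.neg C))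
def cNext (C : Cpt) : Cpt := .untl cBot C
def cDia (C : Cpt) : Cpt := .untl cTop C
def cBox (C : Cpt) : Cpt := .neg (cDia (.neg C))
def cDiaP (C : Cpt) : Cpt := cOr C (cDia C)
def cBoxP (C : Cpt) : Cpt := .inter C (cBox C)
def fTop : Fm := .sub cTop cTop
def fBoxP (φ : Fm) : Fm := .and φ (.neg (.untl fTop (.neg φ)))

mutual
def tmNames : Tm → Finset ℕ
  | .ind a  => {a}
  | .iota C => cNames C

def cNames : Cpt → Finset ℕ
  | .atom _    => ∅
  | .nom τ     => tmNames τ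
  | .neg C     => cNames C
  | .inter C D => cNames C ∪ cNames D
  | .ex _ C    => cNames C
  | .exu C     => cNames C
  | .untl C D  => cNames C ∪ cNames D
end

/-- Individual names occurring in a formula. -/
def fmNames : Fm → Finset ℕ
  | .sub C D  => cNames C ∪ cNames D
  | .neg φ    => fmNames φ
  | .and φ ψ  => fmNames φ ∪ fmNames ψ
  | .untl φ ψ => fmNames φ ∪ fmNames ψ

/-- Totality: every individual name denotes at every instant. -/
def Trace.total (M : Trace) : Prop := ∀ t a, (M.iI t a).isSome

lemma cBot_ext (M : Trace) (t : ℕ) : cExt M t cBot = ∅ := by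
  simp [cBot, cExt]

lemma cTop_ext (M : Trace) (t : ℕ) : cExt M t cTop = Set.univ := by
  simp [cTop, cExt, cBot_ext]

lemma nom_ext (M : Trace) (t a : ℕ) :
    cExt M t (.nom (.ind a)) = {d | M.iI t a = some d} := by
  simp [cExt, tmVal]

lemma key_iff (M : Trace) (a : ℕ) :
    (∀ d : M.Δ, (∃ t, M.iI t a = some d) → ∀ t, M.iI t a = some d) ↔
    ((∀ t : ℕ, M.iI t a = none) ∨ (∃ d : M.Δ, ∀ t : ℕ, M.iI t a = some d)) := by
  constructor
  · intro h
    by_cases hg : ∀ t, M.iI t a = none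
    · exact Or.inl hg
    · push_neg at hg
      obtain ⟨t, ht⟩ := hg
      obtain ⟨d, hd⟩ := Option.ne_none_iff_exists'.mp ht
      exact Or.inr ⟨d, h d ⟨t, hd⟩⟩
  · rintro (h | ⟨d, hd⟩) e ⟨t, ht⟩ u
    · rw [h t] at ht; cases ht
    · rw [hd t] at ht; rw [hd u, ht]

/-- on partial infinite traces, `M,0 ⊨ ◇⁺{a} ⊑ □⁺{a}` holds iff either `a`
is a ghost in `M` or `a` denotes the same domain element at all instants; i.e. this CI
enforces rigid designation of `a`. -/
theorem rigid_CI_iff (M : Trace) (a : ℕ) :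
    sat M 0 (.sub (cDiaP (.nom (.ind a))) (cBoxP (.nom (.ind a)))) ↔
    ((∀ t : ℕ, M.iI t a = none) ∨ (∃ d : M.Δ, ∀ t : ℕ, M.iI t a = some d)) := by
  rw [← key_iff]
  constructor
  · intro h d ⟨t, ht⟩ u
    have hd : d ∈ cExt M 0 (cDiaP (.nom (.ind a))) := by
      simp only [cDiaP, cOr, cDia, cExt, cTop_ext, nom_ext, Set.mem_compl_iff,
        Set.mem_inter_iff, not_and, not_not]
      intro hne
      rcases Nat.eq_zero_or_pos t with h0 | hpos
      · exact absurd (h0 ▸ ht) (by simpa [tmVal] using hne)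
      · exact ⟨t, hpos, by simpa [nom_ext, tmVal] using ht, fun v _ _ => by simp⟩
    have := h hd
    simp only [cBoxP, cBox, cDia, cExt, cTop_ext, nom_ext, Set.mem_inter_iff,
      Set.mem_compl_iff, Set.mem_setOf_eq] at this
    obtain ⟨h0, hbox⟩ := this
    rcases Nat.eq_zero_or_pos u with h0' | hpos
    · rwa [h0']
    · by_contra hc
      exact hbox ⟨u, hpos, by simpa [nom_ext, tmVal] using hc, fun v _ _ => by simp⟩
  · intro h d hd
    simp only [cDiaP, cOr, cDia, cExt, cTop_ext, nom_ext, Set.mem_compl_iff,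
      Set.mem_inter_iff, not_and, not_not, Set.mem_setOf_eq] at hd
    have hex : ∃ t, M.iI t a = some d := by
      by_cases h0 : M.iI 0 a = some d
      · exact ⟨0, h0⟩
      · have h0' : d ∉ cExt M 0 (Cpt.nom (Tm.ind a)) := by simpa [nom_ext] using h0
        obtain ⟨u, _, hu, _⟩ := hd h0'
        exact ⟨u, by simpa [nom_ext, tmVal] using hu⟩
    have hall := h d hex
    simp only [cBoxP, cBox, cDia, cExt, cTop_ext, nom_ext, Set.mem_inter_iff,
      Set.mem_compl_iff, Set.mem_setOf_eq]
    refine ⟨hall 0, ?_⟩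
    rintro ⟨u, -, hu, -⟩
    exact (by simpa [nom_ext, tmVal] using hu : ¬ M.iI u a = some d) (hall u)
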